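/- arXiv:2101.07731 — 2 statements merged into one kernel-verified Lean document; each statement's English description precedes it below -/
import Mathlib

section
/- Let (X,d) be a metric space, W ≥ 1 an integer, and Q = (q_1,…,q_n), C = (c_1,…,c_n) sequences in X, and let L(i,j) be the lower bounds produced by the LB_TI recursion. Then Σ_{j=1}^n min{ L(i,j) : 1 ≤ i ≤ n, |i − j| ≤ W } ≤ DTW_W(Q,C). -/
/-!
Induction along the recursion shows `L i j ≤ d(q_i, c_j) ≤ U i j` throughout the window: each
recursive step moves one endpoint by a known distance `a`, and the triangle inequality turns
bounds `l ≤ d ≤ u` into `max (l - a) (a - u) ≤ d' ≤ u + a`. A warping path visits every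
candidate index `j`, each visit costs at least the window minimum for `j`, and all costs are
nonnegative, so the sum of the window minima is at most the cost of the path.
-/

/-- A window-`W` warping path for two series of length `n`. -/
def IsWarpPath (n W K : ℕ) (p : ℕ → ℕ × ℕ) : Prop :=
  1 ≤ K ∧ p 1 = (1, 1) ∧ p K = (n, n) ∧
  (∀ k, 1 ≤ k → k < K →
    p (k + 1) = ((p k).1 + 1, (p k).2) ∨
    p (k + 1) = ((p k).1, (p k).2 + 1) ∨
    p (k + 1) = ((p k).1 + 1, (p k).2 + 1)) ∧
  (∀ k, 1 ≤ k → k ≤ K → |((p k).1 : ℤ) - ((p k).2 : ℤ)| ≤ (W : ℤ))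

open Finset

theorem csInf_setOf_exists_Icc_le {α : Type*} [ConditionallyCompleteLinearOrder α]
    {f : ℕ → α} {P : ℕ → Prop} {n i : ℕ} (hi : 1 ≤ i) (hin : i ≤ n) (hP : P i) :
    sInf {x | ∃ i, 1 ≤ i ∧ i ≤ n ∧ P i ∧ x = f i} ≤ f i := by
  refine csInf_le ((Set.finite_Icc 1 n |>.image f).subset ?_).bddBelow ⟨i, hi, hin, hP, rfl⟩
  rintro _ ⟨i, hi, hin, -, rfl⟩
  exact ⟨i, ⟨hi, hin⟩, rfl⟩

theorem Finset.sum_le_sum_of_surjOn_of_nonneg {ι κ R : Type*} [DecidableEq κ]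
    [AddCommMonoid R] [PartialOrder R] [IsOrderedAddMonoid R]
    {s : Finset ι} {t : Finset κ} {g : ι → κ} {f : ι → R} {b : κ → R}
    (hsurj : ∀ y ∈ t, ∃ i ∈ s, g i = y) (hf : ∀ i ∈ s, 0 ≤ f i)
    (hb : ∀ i ∈ s, b (g i) ≤ f i) :
    ∑ y ∈ t, b y ≤ ∑ i ∈ s, f i := by
  have hfiber : ∀ y, 0 ≤ ∑ i ∈ s with g i = y, f i :=
    fun y ↦ sum_nonneg fun i hi ↦ hf i (mem_filter.1 hi).1
  refine le_trans (sum_le_sum fun y hy ↦ ?_) (sum_fiberwise_le_sum_of_sum_fiber_nonneg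
    fun y _ ↦ hfiber y)
  obtain ⟨i, hi, rfl⟩ := hsurj y hy
  exact (hb i hi).trans <| single_le_sum (fun k hk ↦ hf k (mem_filter.1 hk).1)
    (mem_filter.2 ⟨hi, rfl⟩)

theorem Nat.exists_mem_Icc_eq_of_le_succ {g : ℕ → ℕ} {a b j : ℕ} (hab : a ≤ b)
    (hstep : ∀ k, a ≤ k → k < b → g (k + 1) ≤ g k + 1) (haj : g a ≤ j)
    (hjb : j ≤ g b) : ∃ k ∈ Icc a b, g k = j := by
  induction b, hab using Nat.le_induction with
  | base => exact ⟨a, by simp, by omega⟩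
  | succ b hab ih =>
    by_cases hj : j ≤ g b
    · obtain ⟨k, hk, rfl⟩ := ih (fun k hak hkb ↦ hstep k hak (by omega)) hj
      exact ⟨k, by simp only [mem_Icc] at hk ⊢; omega, rfl⟩
    · have := hstep b hab (by omega)
      exact ⟨b + 1, by simp only [mem_Icc]; omega, by omega⟩

theorem dist_mem_Icc_of_dist_mem_Icc {X : Type*} [PseudoMetricSpace X] {x y z : X} {l u : ℝ}
    (h : dist x z ∈ Set.Icc l u) :
    dist y z ∈ Set.Icc (max (l - dist x y) (dist x y - u)) (u + dist x y) := by
  obtain ⟨hl, hu⟩ := h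
  have h₁ := dist_triangle x y z
  have h₂ := dist_triangle y x z
  have h₃ := dist_triangle_right x y z
  rw [dist_comm y x] at h₂
  exact ⟨max_le (by linarith) (by linarith), by linarith⟩

namespace IsWarpPath

variable {n W K : ℕ} {p : ℕ → ℕ × ℕ}

theorem fst_le_succ (hp : IsWarpPath n W K p) {k : ℕ} (hk : 1 ≤ k) (hkK : k < K) :
    (p k).1 ≤ (p (k + 1)).1 ∧ (p (k + 1)).1 ≤ (p k).1 + 1 := by
  rcases hp.2.2.2.1 k hk hkK with h | h | h <;> simp [h]

theorem snd_le_succ (hp : IsWarpPath n W K p) {k : ℕ} (hk : 1 ≤ k) (hkK : k < K) :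
    (p k).2 ≤ (p (k + 1)).2 ∧ (p (k + 1)).2 ≤ (p k).2 + 1 := by
  rcases hp.2.2.2.1 k hk hkK with h | h | h <;> simp [h]

theorem monotoneOn_fst (hp : IsWarpPath n W K p) : MonotoneOn (fun k ↦ (p k).1) (Set.Icc 1 K) :=
  monotoneOn_of_le_succ Set.ordConnected_Icc fun _ _ hk hk' ↦
    (hp.fst_le_succ hk.1 (Order.succ_le_iff.1 hk'.2)).1

theorem monotoneOn_snd (hp : IsWarpPath n W K p) : MonotoneOn (fun k ↦ (p k).2) (Set.Icc 1 K) :=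
  monotoneOn_of_le_succ Set.ordConnected_Icc fun _ _ hk hk' ↦
    (hp.snd_le_succ hk.1 (Order.succ_le_iff.1 hk'.2)).1

theorem coords_mem_Icc (hp : IsWarpPath n W K p) {k : ℕ} (hk : 1 ≤ k) (hkK : k ≤ K) :
    (p k).1 ∈ Icc 1 n ∧ (p k).2 ∈ Icc 1 n := by
  replace hk : k ∈ Set.Icc 1 K := ⟨hk, hkK⟩
  obtain ⟨hK, h1, hK', -⟩ := id hp
  have hone : (1 : ℕ) ∈ Set.Icc 1 K := ⟨le_rfl, hK⟩
  have hlast : K ∈ Set.Icc 1 K := ⟨hK, le_rfl⟩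
  have h₁ := hp.monotoneOn_fst hone hk hk.1
  have h₂ := hp.monotoneOn_fst hk hlast hk.2
  have h₃ := hp.monotoneOn_snd hone hk hk.1
  have h₄ := hp.monotoneOn_snd hk hlast hk.2
  simp only [h1, hK'] at h₁ h₂ h₃ h₄
  simp only [Finset.mem_Icc]
  omega

theorem exists_snd_eq (hp : IsWarpPath n W K p) {j : ℕ} (hj : j ∈ Icc 1 n) :
    ∃ k ∈ Icc 1 K, (p k).2 = j := by
  obtain ⟨hK, h1, hK', -⟩ := id hp
  rw [Finset.mem_Icc] at hj
  exact Nat.exists_mem_Icc_eq_of_le_succ hK (fun k hk hkK ↦ (hp.snd_le_succ hk hkK).2)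
    (by simp [h1, hj.1]) (by simp [hK', hj.2])

end IsWarpPath

section LBTI

variable {X : Type*} [PseudoMetricSpace X]

structure IsLBTI (n W : ℕ) (q c : ℕ → X) (L U : ℕ → ℕ → ℝ) : Prop where
  base : ∀ j, 1 ≤ j → j ≤ min n (1 + W) →
    L 1 j = dist (q 1) (c j) ∧ U 1 j = dist (q 1) (c j)
  step_query : ∀ i j, 2 ≤ i → i ≤ n → max 1 (i - W) ≤ j → j ≤ min n (i + W - 1) →
    L i j = max (L (i - 1) j - dist (q (i - 1)) (q i)) (dist (q (i - 1)) (q i) - U (i - 1) j) ∧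
    U i j = U (i - 1) j + dist (q (i - 1)) (q i)
  step_candidate : ∀ i, 2 ≤ i → i ≤ n → i + W ≤ n →
    L i (i + W) = max (L i (i + W - 1) - dist (c (i + W - 1)) (c (i + W)))
      (dist (c (i + W - 1)) (c (i + W)) - U i (i + W - 1)) ∧
    U i (i + W) = U i (i + W - 1) + dist (c (i + W - 1)) (c (i + W))

theorem IsLBTI.dist_mem_Icc {n W : ℕ} {q c : ℕ → X} {L U : ℕ → ℕ → ℝ}
    (h : IsLBTI n W q c L U) (hW : 1 ≤ W) {i j : ℕ} (hi : 1 ≤ i) (hin : i ≤ n)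
    (hj : 1 ≤ j) (hjn : j ≤ n) (hij : i ≤ j + W) (hji : j ≤ i + W) :
    dist (q i) (c j) ∈ Set.Icc (L i j) (U i j) := by
  induction i, hi using Nat.le_induction generalizing j with
  | base =>
    obtain ⟨hL, hU⟩ := h.base j hj (by omega)
    rw [hL, hU]
    exact Set.left_mem_Icc.2 le_rfl
  | succ i hi ih =>
    have interior : ∀ j, 1 ≤ j → j ≤ n → i + 1 ≤ j + W → j ≤ i + W →
        dist (q (i + 1)) (c j) ∈ Set.Icc (L (i + 1) j) (U (i + 1) j) := by
      intro j hj hjn hij hji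
      obtain ⟨hL, hU⟩ := h.step_query (i + 1) j (by omega) hin (by omega) (by omega)
      simp only [Nat.add_sub_cancel] at hL hU
      rw [hL, hU]
      exact dist_mem_Icc_of_dist_mem_Icc (ih (by omega) hj hjn (by omega) (by omega))
    rcases (show j ≤ i + W ∨ j = i + 1 + W by omega) with hji | rfl
    · exact interior j hj hjn hij hji
    · obtain ⟨hL, hU⟩ := h.step_candidate (i + 1) (by omega) hin hjn
      rw [show i + 1 + W - 1 = i + W by omega] at hL hU
      have hprev := interior (i + W) (by omega) (by omega) (by omega) le_rfl
      rw [dist_comm] at hprev ⊢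
      rw [hL, hU]
      exact dist_mem_Icc_of_dist_mem_Icc hprev

end LBTI

theorem lbti_le_dtw_general {X : Type*} [MetricSpace X]
    (n W : ℕ) (hW : 1 ≤ W)
    (q c : ℕ → X) (L U : ℕ → ℕ → ℝ)
    (hbase : ∀ j, 1 ≤ j → j ≤ min n (1 + W) →
      L 1 j = dist (q 1) (c j) ∧ U 1 j = dist (q 1) (c j))
    (hind : ∀ i j, 2 ≤ i → i ≤ n → max 1 (i - W) ≤ j → j ≤ min n (i + W - 1) →
      L i j = max (L (i - 1) j - dist (q (i - 1)) (q i))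
                  (dist (q (i - 1)) (q i) - U (i - 1) j) ∧
      U i j = U (i - 1) j + dist (q (i - 1)) (q i))
    (htop : ∀ i, 2 ≤ i → i ≤ n → i + W ≤ n →
      L i (i + W) = max (L i (i + W - 1) - dist (c (i + W - 1)) (c (i + W)))
                        (dist (c (i + W - 1)) (c (i + W)) - U i (i + W - 1)) ∧
      U i (i + W) = U i (i + W - 1) + dist (c (i + W - 1)) (c (i + W)))
    (K : ℕ) (p : ℕ → ℕ × ℕ) (hp : IsWarpPath n W K p) :
    ∑ j ∈ Finset.Icc 1 n,
        sInf {x : ℝ | ∃ i, 1 ≤ i ∧ i ≤ n ∧ |(i : ℤ) - (j : ℤ)| ≤ (W : ℤ) ∧ x = L i j} ≤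
      ∑ k ∈ Finset.Icc 1 K, dist (q (p k).1) (c (p k).2) := by
  have hLU : IsLBTI n W q c L U := ⟨hbase, hind, htop⟩
  refine sum_le_sum_of_surjOn_of_nonneg (g := fun k ↦ (p k).2) (fun j hj ↦ hp.exists_snd_eq hj)
    (fun _ _ ↦ dist_nonneg) fun k hk ↦ ?_
  obtain ⟨hk, hkK⟩ := Finset.mem_Icc.1 hk
  obtain ⟨hi, hj⟩ := hp.coords_mem_Icc hk hkK
  rw [Finset.mem_Icc] at hi hj
  have hwindow := hp.2.2.2.2 k hk hkK
  obtain ⟨hij, hji⟩ := abs_le.1 hwindow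
  calc _ ≤ L (p k).1 (p k).2 :=
        csInf_setOf_exists_Icc_le (f := (L · (p k).2)) hi.1 hi.2 hwindow
    _ ≤ _ := (hLU.dist_mem_Icc hW hi.1 hi.2 hj.1 hj.2 (by omega) (by omega)).1

/-- Soundness of the LB_TI lower bound: if `L` and `U` satisfy the LB_TI recursion, then
the sum over all candidate points `c j` of the minimum of `L i j` over the query points
`q i` in the window of `c j` is at most the cost of every window-`W` warping path, hence
at most `DTW_W(Q,C)`. -/
theorem lbti_le_dtw {X : Type*} [MetricSpace X]
    (n W : ℕ) (hW : 1 ≤ W) (hn : 1 ≤ n)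
    (q c : ℕ → X) (L U : ℕ → ℕ → ℝ)
    (hbase : ∀ j, 1 ≤ j → j ≤ min n (1 + W) →
      L 1 j = dist (q 1) (c j) ∧ U 1 j = dist (q 1) (c j))
    (hind : ∀ i j, 2 ≤ i → i ≤ n → max 1 (i - W) ≤ j → j ≤ min n (i + W - 1) →
      L i j = max (L (i - 1) j - dist (q (i - 1)) (q i))
                  (dist (q (i - 1)) (q i) - U (i - 1) j) ∧
      U i j = U (i - 1) j + dist (q (i - 1)) (q i))
    (htop : ∀ i, 2 ≤ i → i ≤ n → i + W ≤ n →
      L i (i + W) = max (L i (i + W - 1) - dist (c (i + W - 1)) (c (i + W)))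
                        (dist (c (i + W - 1)) (c (i + W)) - U i (i + W - 1)) ∧
      U i (i + W) = U i (i + W - 1) + dist (c (i + W - 1)) (c (i + W)))
    (K : ℕ) (p : ℕ → ℕ × ℕ) (hp : IsWarpPath n W K p) :
    ∑ j ∈ Finset.Icc 1 n,
        sInf {x : ℝ | ∃ i, 1 ≤ i ∧ i ≤ n ∧ |(i : ℤ) - (j : ℤ)| ≤ (W : ℤ) ∧ x = L i j} ≤
      ∑ k ∈ Finset.Icc 1 K, dist (q (p k).1) (c (p k).2) :=
  lbti_le_dtw_general n W hW q c L U hbase hind htop K p hp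
end

section
/- Let Q = (q_1,…,q_n) and C = (c_1,…,c_n) be sequences in ℝ^D, and let W ≥ 0 be an integer. For each j define the envelope u_{j,p} = max{ q_{i,p} : |i−j| ≤ W, 1 ≤ i ≤ n } and l_{j,p} = min{ q_{i,p} : |i−j| ≤ W, 1 ≤ i ≤ n }, and the penalty pen(j,p) = max(c_{j,p} − u_{j,p}, l_{j,p} − c_{j,p}, 0). Then Σ_{j=1}^n Σ_{p=1}^D pen(j,p)² ≤ DTW²_W(Q,C); equivalently, LB_MV(Q,C) = sqrt(Σ_{j=1}^n Σ_{p=1}^D pen(j,p)²) ≤ sqrt(DTW²_W(Q,C)). -/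
/-- The LB_MV per-point per-dimension penalty: `pen(j,p) = max (c_{j,p} - u_{j,p})
(max (l_{j,p} - c_{j,p}) 0)`, where `u_{j,p}` and `l_{j,p}` are the max and min of the
`p`-th coordinates of the query points `q i` with `1 ≤ i ≤ n` and `|i - j| ≤ W`. -/
noncomputable def lbmvPen {D : ℕ} (n W : ℕ) (q c : ℕ → EuclideanSpace ℝ (Fin D))
    (j : ℕ) (p : Fin D) : ℝ :=
  max (c j p -
        sSup ((fun i => q i p) '' {i : ℕ | 1 ≤ i ∧ i ≤ n ∧ |(i : ℤ) - (j : ℤ)| ≤ (W : ℤ)}))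
      (max (sInf ((fun i => q i p) ''
              {i : ℕ | 1 ≤ i ∧ i ≤ n ∧ |(i : ℤ) - (j : ℤ)| ≤ (W : ℤ)}) - c j p) 0)

theorem Nat.exists_mem_Icc_eq_of_le_add_one {f : ℕ → ℕ} {a b j : ℕ} (hab : a ≤ b)
    (hf : ∀ k, a ≤ k → k < b → f (k + 1) ≤ f k + 1) (ha : f a ≤ j) (hb : j ≤ f b) :
    ∃ k ∈ Finset.Icc a b, f k = j := by
  induction b, hab using Nat.le_induction with
  | base => exact ⟨a, by simp, le_antisymm ha hb⟩
  | succ b hab ih =>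
    by_cases hjb : j ≤ f b
    · obtain ⟨k, hk, hkj⟩ := ih (fun k hak hkb => hf k hak (by omega)) hjb
      exact ⟨k, by simp only [Finset.mem_Icc] at hk ⊢; omega, hkj⟩
    · have := hf b hab (by omega)
      exact ⟨b + 1, by simp only [Finset.mem_Icc]; omega, by omega⟩

theorem max_sub_csSup_max_csInf_sub_le_abs_sub {α : Type*} [ConditionallyCompleteLinearOrder α]
    [AddCommGroup α] [IsOrderedAddMonoid α] {S : Set α} (hS : BddAbove S) (hS' : BddBelow S)
    {x : α} (hx : x ∈ S) (c : α) :
    max (c - sSup S) (max (sInf S - c) 0) ≤ |x - c| := by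
  have hsup : x ≤ sSup S := le_csSup hS hx
  have hinf : sInf S ≤ x := csInf_le hS' hx
  refine max_le ?_ (max_le ?_ (abs_nonneg _))
  · calc c - sSup S ≤ c - x := sub_le_sub_left hsup c
      _ ≤ |x - c| := by rw [abs_sub_comm]; exact le_abs_self _
  · calc sInf S - c ≤ x - c := sub_le_sub_right hinf c
      _ ≤ |x - c| := le_abs_self _

namespace IsWarpPath

variable {n W K : ℕ} {π : ℕ → ℕ × ℕ}

theorem le_add_one (hπ : IsWarpPath n W K π) {k : ℕ} (hk : 1 ≤ k) (hkK : k < K) :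
    π k ≤ π (k + 1) := by
  rcases hπ.2.2.2.1 k hk hkK with h | h | h <;> simp [h, Prod.le_def]

theorem snd_add_one_le (hπ : IsWarpPath n W K π) (k : ℕ) (hk : 1 ≤ k) (hkK : k < K) :
    (π (k + 1)).2 ≤ (π k).2 + 1 := by
  rcases hπ.2.2.2.1 k hk hkK with h | h | h <;> simp [h]

theorem monotoneOn (hπ : IsWarpPath n W K π) : MonotoneOn π (Set.Icc 1 K) :=
  monotoneOn_of_le_succ Set.ordConnected_Icc fun k _ hk hk' => by
    rw [Order.succ_eq_add_one] at hk' ⊢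
    exact hπ.le_add_one hk.1 (by have := hk'.2; omega)

theorem fst_mem_Icc (hπ : IsWarpPath n W K π) {k : ℕ} (hk : k ∈ Finset.Icc 1 K) :
    (π k).1 ∈ Finset.Icc 1 n := by
  have hmono := hπ.monotoneOn
  obtain ⟨hK, hstart, hend, -⟩ := hπ
  rw [Finset.mem_Icc] at hk ⊢
  have hfirst := (hmono ⟨le_rfl, hK⟩ hk hk.1).1
  have hlast := (hmono hk ⟨hK, le_rfl⟩ hk.2).1
  rw [hstart] at hfirst
  rw [hend] at hlast
  exact ⟨hfirst, hlast⟩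

theorem abs_fst_sub_snd_le (hπ : IsWarpPath n W K π) {k : ℕ} (hk : k ∈ Finset.Icc 1 K) :
    |((π k).1 : ℤ) - ((π k).2 : ℤ)| ≤ (W : ℤ) :=
  hπ.2.2.2.2 k (Finset.mem_Icc.1 hk).1 (Finset.mem_Icc.1 hk).2

theorem Icc_subset_image_snd (hπ : IsWarpPath n W K π) :
    Finset.Icc 1 n ⊆ (Finset.Icc 1 K).image fun k => (π k).2 := by
  have hstep := hπ.snd_add_one_le
  obtain ⟨hK, hstart, hend, -⟩ := hπ
  intro j hj
  rw [Finset.mem_Icc] at hj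
  obtain ⟨k, hk, hkj⟩ := Nat.exists_mem_Icc_eq_of_le_add_one (f := fun k => (π k).2) (j := j) hK
    hstep (by simp [hstart, hj.1]) (by simp [hend, hj.2])
  exact Finset.mem_image.2 ⟨k, hk, hkj⟩

end IsWarpPath

section lbmvPen

variable {D n W : ℕ} {q c : ℕ → EuclideanSpace ℝ (Fin D)} {i j : ℕ}

theorem lbmvPen_nonneg (p : Fin D) : 0 ≤ lbmvPen n W q c j p :=
  le_max_of_le_right (le_max_right _ _)

theorem lbmvPen_le_abs_sub (hi : 1 ≤ i) (hin : i ≤ n) (hij : |(i : ℤ) - (j : ℤ)| ≤ (W : ℤ))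
    (p : Fin D) : lbmvPen n W q c j p ≤ |q i p - c j p| := by
  have hfin : ((fun i => q i p) ''
      {i : ℕ | 1 ≤ i ∧ i ≤ n ∧ |(i : ℤ) - (j : ℤ)| ≤ (W : ℤ)}).Finite :=
    ((Set.finite_Icc 1 n).subset fun k hk => ⟨hk.1, hk.2.1⟩).image _
  exact max_sub_csSup_max_csInf_sub_le_abs_sub hfin.bddAbove hfin.bddBelow
    ⟨i, ⟨hi, hin, hij⟩, rfl⟩ _

theorem sum_lbmvPen_sq_le_norm_sub_sq (hi : 1 ≤ i) (hin : i ≤ n)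
    (hij : |(i : ℤ) - (j : ℤ)| ≤ (W : ℤ)) :
    ∑ p : Fin D, lbmvPen n W q c j p ^ 2 ≤ ‖q i - c j‖ ^ 2 := by
  rw [EuclideanSpace.norm_sq_eq]
  refine Finset.sum_le_sum fun p _ => ?_
  rw [PiLp.sub_apply, Real.norm_eq_abs]
  exact pow_le_pow_left₀ (lbmvPen_nonneg p) (lbmvPen_le_abs_sub hi hin hij p) 2

end lbmvPen

theorem lbmv_le_dtw_general {D : ℕ} (n W : ℕ)
    (q c : ℕ → EuclideanSpace ℝ (Fin D))
    (K : ℕ) (π : ℕ → ℕ × ℕ) (hπ : IsWarpPath n W K π) :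
    (∑ j ∈ Finset.Icc 1 n, ∑ p : Fin D, lbmvPen n W q c j p ^ 2 ≤
        ∑ k ∈ Finset.Icc 1 K, ‖q (π k).1 - c (π k).2‖ ^ 2) ∧
    Real.sqrt (∑ j ∈ Finset.Icc 1 n, ∑ p : Fin D, lbmvPen n W q c j p ^ 2) ≤
      Real.sqrt (∑ k ∈ Finset.Icc 1 K, ‖q (π k).1 - c (π k).2‖ ^ 2) := by
  set pen : ℕ → ℝ := fun j => ∑ p : Fin D, lbmvPen n W q c j p ^ 2
  have pen_nonneg : ∀ j, 0 ≤ pen j := fun j => Finset.sum_nonneg fun p _ => sq_nonneg _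
  have cell_cost : ∀ k ∈ Finset.Icc 1 K, pen (π k).2 ≤ ‖q (π k).1 - c (π k).2‖ ^ 2 := by
    intro k hk
    obtain ⟨hi, hin⟩ := Finset.mem_Icc.1 (hπ.fst_mem_Icc hk)
    exact sum_lbmvPen_sq_le_norm_sub_sq hi hin (hπ.abs_fst_sub_snd_le hk)
  have key : ∑ j ∈ Finset.Icc 1 n, pen j ≤ ∑ k ∈ Finset.Icc 1 K, ‖q (π k).1 - c (π k).2‖ ^ 2 :=
    calc ∑ j ∈ Finset.Icc 1 n, pen j
        ≤ ∑ j ∈ (Finset.Icc 1 K).image fun k => (π k).2, pen j :=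
          Finset.sum_le_sum_of_subset_of_nonneg hπ.Icc_subset_image_snd fun j _ _ => pen_nonneg j
      _ ≤ ∑ k ∈ Finset.Icc 1 K, pen (π k).2 :=
          Finset.sum_image_le_of_nonneg fun j _ => pen_nonneg j
      _ ≤ _ := Finset.sum_le_sum cell_cost
  exact ⟨key, Real.sqrt_le_sqrt key⟩

/-- Soundness of LB_MV (Rath–Manmatha): the sum of the squared envelope penalties is at
most the squared cost of every window-`W` warping path, hence at most `DTW²_W(Q,C)`;
equivalently, `LB_MV(Q,C) ≤ sqrt (DTW²_W(Q,C))`. -/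
theorem lbmv_le_dtw {D : ℕ} (n W : ℕ) (hn : 1 ≤ n)
    (q c : ℕ → EuclideanSpace ℝ (Fin D))
    (K : ℕ) (π : ℕ → ℕ × ℕ) (hπ : IsWarpPath n W K π) :
    (∑ j ∈ Finset.Icc 1 n, ∑ p : Fin D, lbmvPen n W q c j p ^ 2 ≤
        ∑ k ∈ Finset.Icc 1 K, ‖q (π k).1 - c (π k).2‖ ^ 2) ∧
    Real.sqrt (∑ j ∈ Finset.Icc 1 n, ∑ p : Fin D, lbmvPen n W q c j p ^ 2) ≤
      Real.sqrt (∑ k ∈ Finset.Icc 1 K, ‖q (π k).1 - c (π k).2‖ ^ 2) :=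
  lbmv_le_dtw_general n W q c K π hπ
end
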